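/- Let S = (ℝ×(-1,1)) ∪ ((-2,2)×{-1,1}) ⊆ ℝ×[-1,1], with the subspace topology, so that S is a model strip whose lower and upper boundary parts are the intervals (-2,2)×{-1} and (-2,2)×{1}. Let ~ be the equivalence relation on S generated by (t,1) ~ (t,-1) for all t ∈ (-2,2), and let C = S/~ be the quotient space. Then C is homeomorphic to the open cylinder S¹ × ℝ. -/

import Mathlib

/-!
Straighten the strip: for `a = 1 - |y|`, the horizontal map `stretch a` is a homeomorphism of `ℝ`
onto the row of `S` at height `y` (onto `(-2, 2)` when `|y| = 1`), jointly in `(y, s)`, so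
`[-1, 1] × ℝ ≃ₜ S`. Under this identification the gluing becomes `(1, s) ~ (-1, s)`, whose quotient
map `(y, s) ↦ (exp (iπy), s)` onto `S¹ × ℝ` is proper, hence a quotient map. The induced map
`C → S¹ × ℝ` is therefore an injective quotient map, i.e. a homeomorphism.
-/

/-- The model strip `S = (ℝ × (-1,1)) ∪ ((-2,2) × {-1,1}) ⊆ ℝ × [-1,1]`, whose lower and upper
boundary parts are the intervals `(-2,2) × {-1}` and `(-2,2) × {1}`. -/
def Strip13 : Set (ℝ × ℝ) :=
  (Set.univ ×ˢ Set.Ioo (-1 : ℝ) 1) ∪ (Set.Ioo (-2 : ℝ) 2 ×ˢ ({-1, 1} : Set ℝ))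

/-- The gluing relation identifying `(t, 1)` with `(t, -1)` for `t ∈ (-2, 2)`; the quotient
`Quot Glue13` is the quotient of `Strip13` by the equivalence relation it generates. -/
def Glue13 (p q : Strip13) : Prop :=
  (p : ℝ × ℝ).1 = (q : ℝ × ℝ).1 ∧ (p : ℝ × ℝ).2 = 1 ∧ (q : ℝ × ℝ).2 = -1

open Set Real Topology

/- For `a > 0`, `stretch a` is `s ↦ (a + 2) s / (1 + s)` on `[0, 2 / a]` and `s ↦ a s` beyond,
extended oddly; for `a = 0` it is `s ↦ 2 s / (1 + |s|) : ℝ ≃ (-2, 2)`. Either way its inverse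
`unstretch a` is again piecewise rational. -/
noncomputable def stretchFactor (a s : ℝ) : ℝ := max ((a + 2) / (1 + |s|)) a

noncomputable def stretch (a s : ℝ) : ℝ := s * stretchFactor a s

noncomputable def unstretch (a t : ℝ) : ℝ := t / (a + max 0 (2 - |t|))

section Stretch

variable {a : ℝ}

lemma stretchFactor_pos (ha : 0 ≤ a) (s : ℝ) : 0 < stretchFactor a s :=
  lt_max_of_lt_left (by positivity)

lemma add_max_sub_abs_stretch (ha : 0 ≤ a) (s : ℝ) :
    a + max 0 (2 - |stretch a s|) = stretchFactor a s := by
  have hs : 0 < 1 + |s| := by positivity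
  rw [stretch, abs_mul, abs_of_pos (stretchFactor_pos ha s), stretchFactor]
  rcases le_or_gt (a * |s|) 2 with h | h
  · have hle : a ≤ (a + 2) / (1 + |s|) := by rw [le_div_iff₀ hs]; linarith
    have hrest : 2 - |s| * ((a + 2) / (1 + |s|)) = (2 - a * |s|) / (1 + |s|) := by
      field_simp; ring
    rw [max_eq_left hle, hrest, max_eq_right (by positivity [sub_nonneg.2 h])]
    field_simp
    ring
  · have hle : (a + 2) / (1 + |s|) ≤ a := by rw [div_le_iff₀ hs]; linarith
    rw [max_eq_right hle, max_eq_left (by linarith), add_zero]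

lemma unstretch_stretch (ha : 0 ≤ a) (s : ℝ) : unstretch a (stretch a s) = s := by
  rw [unstretch, add_max_sub_abs_stretch ha, stretch,
    mul_div_cancel_right₀ _ (stretchFactor_pos ha s).ne']

lemma stretchFactor_unstretch (ha : 0 ≤ a) {t : ℝ} (ht : 0 < a + max 0 (2 - |t|)) :
    stretchFactor a (unstretch a t) = a + max 0 (2 - |t|) := by
  set d := a + max 0 (2 - |t|) with hd
  have hfac : (a + 2) / (1 + |unstretch a t|) = (a + 2) * d / (d + |t|) := by
    rw [unstretch, ← hd, abs_div, abs_of_pos ht]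
    field_simp
  rw [stretchFactor, hfac]
  rcases le_or_gt |t| 2 with h | h
  · have hd' : d = a + (2 - |t|) := by rw [hd, max_eq_right (by linarith)]
    have hsum : d + |t| = a + 2 := by linarith
    rw [hsum, mul_div_cancel_left₀ _ (by linarith), max_eq_left (by linarith)]
  · have hd' : d = a := by rw [hd, max_eq_left (by linarith), add_zero]
    rw [hd'] at ht ⊢
    refine max_eq_right ?_
    rw [div_le_iff₀ (by positivity)]
    nlinarith

lemma stretch_unstretch (ha : 0 ≤ a) {t : ℝ} (ht : 0 < a + max 0 (2 - |t|)) :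
    stretch a (unstretch a t) = t := by
  rw [stretch, stretchFactor_unstretch ha ht, unstretch, div_mul_cancel₀ _ ht.ne']

lemma abs_stretch_zero_lt (s : ℝ) : |stretch 0 s| < 2 := by
  have hs : 0 < 1 + |s| := by positivity
  have hfac : stretchFactor 0 s = 2 / (1 + |s|) := by
    rw [stretchFactor, zero_add, max_eq_left (by positivity)]
  rw [stretch, hfac, abs_mul, abs_of_pos (by positivity : (0:ℝ) < 2 / (1 + |s|)),
    mul_div_assoc', div_lt_iff₀ hs]
  linarith

lemma continuous_stretch : Continuous fun p : ℝ × ℝ => stretch p.1 p.2 := by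
  unfold stretch stretchFactor
  fun_prop (disch := intro p; positivity)

end Stretch

lemma mem_strip13_iff {p : ℝ × ℝ} : p ∈ Strip13 ↔ |p.2| < 1 ∨ |p.2| = 1 ∧ |p.1| < 2 := by
  simp only [Strip13, mem_union, mem_prod, mem_univ, true_and, mem_Ioo, mem_insert_iff,
    mem_singleton_iff, abs_lt, abs_eq zero_le_one]
  grind

lemma stretch_mem_strip13 {y : ℝ} (hy : |y| ≤ 1) (s : ℝ) :
    (stretch (1 - |y|) s, y) ∈ Strip13 := by
  rcases hy.lt_or_eq with hy | hy
  · exact mem_strip13_iff.2 (Or.inl hy)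
  · refine mem_strip13_iff.2 (Or.inr ⟨hy, ?_⟩)
    simpa only [hy, sub_self] using abs_stretch_zero_lt s

lemma abs_le_one_of_mem_strip13 {p : ℝ × ℝ} (hp : p ∈ Strip13) : |p.2| ≤ 1 := by
  rcases mem_strip13_iff.1 hp with h | h
  exacts [h.le, h.1.le]

lemma unstretch_denom_pos_of_mem_strip13 {p : ℝ × ℝ} (hp : p ∈ Strip13) :
    0 < 1 - |p.2| + max 0 (2 - |p.1|) := by
  rcases mem_strip13_iff.1 hp with h | h
  · linarith [le_max_left 0 (2 - |p.1|)]
  · linarith [le_max_right 0 (2 - |p.1|)]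

noncomputable def stripHomeomorph : Icc (-1 : ℝ) 1 × ℝ ≃ₜ Strip13 where
  toFun x := ⟨(stretch (1 - |(x.1 : ℝ)|) x.2, x.1), stretch_mem_strip13 (abs_le.2 x.1.2) x.2⟩
  invFun p := (⟨p.1.2, abs_le.1 (abs_le_one_of_mem_strip13 p.2)⟩, unstretch (1 - |p.1.2|) p.1.1)
  left_inv x := by
    ext
    · rfl
    · exact unstretch_stretch (sub_nonneg.2 (abs_le.2 x.1.2)) x.2
  right_inv p := by
    ext
    · exact stretch_unstretch (sub_nonneg.2 (abs_le_one_of_mem_strip13 p.2))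
        (unstretch_denom_pos_of_mem_strip13 p.2)
    · rfl
  continuous_toFun := by
    refine Continuous.subtype_mk (Continuous.prodMk ?_ (by fun_prop)) _
    exact continuous_stretch.comp
      ((continuous_const.sub (continuous_subtype_val.comp continuous_fst).abs).prodMk continuous_snd)
  continuous_invFun := by
    refine Continuous.prodMk (by fun_prop) ?_
    exact Continuous.div (by fun_prop) (by fun_prop)
      fun p => (unstretch_denom_pos_of_mem_strip13 p.2).ne'

noncomputable def cylinderProj : Icc (-1 : ℝ) 1 × ℝ → Circle × ℝ :=
  Prod.map (fun y => Circle.exp (π * y)) id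

lemma surjective_circleExp_pi_mul : Function.Surjective fun y : Icc (-1 : ℝ) 1 => Circle.exp (π * y) := by
  intro c
  refine ⟨⟨Complex.arg c / π, ?_, ?_⟩, ?_⟩
  · rw [le_div_iff₀ pi_pos]; linarith [Complex.neg_pi_lt_arg c]
  · rw [div_le_iff₀ pi_pos]; linarith [Complex.arg_le_pi c]
  · simp only [mul_div_cancel₀ _ pi_ne_zero, Circle.exp_arg]

lemma isQuotientMap_cylinderProj : IsQuotientMap cylinderProj := by
  have hexp : Continuous fun y : Icc (-1 : ℝ) 1 => Circle.exp (π * y) := by fun_prop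
  have hsurj := surjective_circleExp_pi_mul.prodMap (Function.surjective_id (α := ℝ))
  exact (hexp.isProperMap.prodMap isProperMap_id).isClosedMap.isQuotientMap
    (hexp.prodMap continuous_id) hsurj

lemma circleExp_pi_mul_eq {y y' : ℝ} (hy : |y| ≤ 1) (hy' : |y'| ≤ 1)
    (h : Circle.exp (π * y) = Circle.exp (π * y')) :
    y = y' ∨ y = 1 ∧ y' = -1 ∨ y = -1 ∧ y' = 1 := by
  obtain ⟨m, hm⟩ := Circle.exp_eq_exp.1 h
  have hym : y = y' + 2 * m := mul_left_cancel₀ pi_ne_zero (by linarith)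
  rw [abs_le] at hy hy'
  have hm1 : m ≤ 1 := by exact_mod_cast (show (m : ℝ) ≤ 1 by linarith)
  have hm2 : -1 ≤ m := by exact_mod_cast (show (-1 : ℝ) ≤ m by linarith)
  interval_cases m <;> push_cast at hym
  · right; right; constructor <;> linarith
  · left; linarith
  · right; left; constructor <;> linarith

lemma cylinderProj_stripHomeomorph_symm (p : Strip13) :
    cylinderProj (stripHomeomorph.symm p) =
      (Circle.exp (π * (p : ℝ × ℝ).2), unstretch (1 - |(p : ℝ × ℝ).2|) (p : ℝ × ℝ).1) :=
  rfl

lemma glue13_stripHomeomorph {x x' : Icc (-1 : ℝ) 1 × ℝ} (h : (x.1 : ℝ) = 1)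
    (h' : (x'.1 : ℝ) = -1) (hs : x.2 = x'.2) : Glue13 (stripHomeomorph x) (stripHomeomorph x') :=
  ⟨by simp [stripHomeomorph, h, h', hs], h, h'⟩

noncomputable def cylinderMap : Quot Glue13 → Circle × ℝ :=
  Quot.lift (cylinderProj ∘ stripHomeomorph.symm) fun p q ⟨ht, hp, hq⟩ => by
    simp only [Function.comp_apply, cylinderProj_stripHomeomorph_symm, ht, hp, hq, abs_neg]
    congr 1
    exact Circle.exp_eq_exp.2 ⟨1, by ring⟩

lemma isQuotientMap_cylinderMap : IsQuotientMap cylinderMap :=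
  isQuotientMap_quot_mk.of_comp_isQuotientMap
    (isQuotientMap_cylinderProj.comp stripHomeomorph.symm.isQuotientMap)

lemma injective_cylinderMap : Function.Injective cylinderMap := by
  rintro ⟨p⟩ ⟨q⟩ hpq
  obtain ⟨x, rfl⟩ := stripHomeomorph.surjective p
  obtain ⟨x', rfl⟩ := stripHomeomorph.surjective q
  change cylinderProj (stripHomeomorph.symm _) = cylinderProj (stripHomeomorph.symm _) at hpq
  simp only [Homeomorph.symm_apply_apply, cylinderProj, Prod.map, Prod.mk.injEq, id] at hpq
  obtain ⟨hy, hs⟩ := hpq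
  rcases circleExp_pi_mul_eq (abs_le.2 x.1.2) (abs_le.2 x'.1.2) hy with h | ⟨h, h'⟩ | ⟨h, h'⟩
  · rw [Prod.ext (Subtype.ext h) hs]
  · exact Quot.sound (glue13_stripHomeomorph h h' hs)
  · exact (Quot.sound (glue13_stripHomeomorph h' h hs.symm)).symm

/-- the quotient `C = S/~` of the model strip `S` obtained by gluing `(t, 1)` to
`(t, -1)`, `t ∈ (-2, 2)`, is homeomorphic to the open cylinder `S¹ × ℝ`. -/
theorem stmt_13 : Nonempty (Quot Glue13 ≃ₜ Circle × ℝ) :=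
  ⟨(isHomeomorph_iff_isQuotientMap_injective.2
    ⟨isQuotientMap_cylinderMap, injective_cylinderMap⟩).homeomorph⟩
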